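/- A graph matroid family M is unbounded if and only if every forest is M-independent. -/

import Mathlib

/-!
Common framework: graph matroid families.

A finite simple graph (without isolated vertices) is identified with its edge
set: a finite set of non-diagonal elements of `Sym2 ℕ`.  A graph matroid
family is encoded, following the paper, as a finitary matroid on the edge set
of the countable complete graph on `ℕ` that is invariant under all
permutations of `ℕ`.
-/

/-- The set of vertices covered by a set of edges. -/
def eSupp (E : Set (Sym2 ℕ)) : Set ℕ := {v : ℕ | ∃ e ∈ E, v ∈ e}

/-- The edge set of the complete graph on the vertex set `V`. -/
def clique (V : Set ℕ) : Set (Sym2 ℕ) := {e : Sym2 ℕ | ¬ e.IsDiag ∧ ∀ v ∈ e, v ∈ V}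

/-- The edge set of the complete graph `K_n` on the vertices `0, …, n-1`. -/
def cliqueN (n : ℕ) : Set (Sym2 ℕ) := clique {v : ℕ | v < n}

/-- `E` is (the edge set of) a finite simple graph. -/
def IsGraph (E : Set (Sym2 ℕ)) : Prop := E.Finite ∧ ∀ e ∈ E, ¬ e.IsDiag

/-- The degree of the vertex `v` in the edge set `E`. -/
noncomputable def deg (E : Set (Sym2 ℕ)) (v : ℕ) : ℕ := {e ∈ E | v ∈ e}.ncard

/-- The minimum degree of (the graph with) edge set `E` (whose vertex set is `eSupp E`). -/
noncomputable def minDeg (E : Set (Sym2 ℕ)) : ℕ := sInf {k : ℕ | ∃ v ∈ eSupp E, deg E v = k}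

/-- Deleting a set `S` of vertices from the graph with edge set `E`. -/
def deleteVerts (E : Set (Sym2 ℕ)) (S : Set ℕ) : Set (Sym2 ℕ) := {e ∈ E | ∀ v ∈ e, v ∉ S}

/-- The graph with edge set `E` is `k`-connected: it has more than `k` vertices and
deleting any set of fewer than `k` vertices leaves a connected graph. -/
def KConnected (k : ℕ) (E : Set (Sym2 ℕ)) : Prop :=
  k < (eSupp E).ncard ∧
  ∀ S : Finset ℕ, S.card < k →
    ((SimpleGraph.fromEdgeSet E).induce (eSupp E \ ↑S)).Connected

/-- `E` is a forest. -/
def IsForest (E : Set (Sym2 ℕ)) : Prop := (SimpleGraph.fromEdgeSet E).IsAcyclic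

/-- `E` is a matching: no two distinct edges of `E` share a vertex. -/
def IsMatching (E : Set (Sym2 ℕ)) : Prop :=
  ∀ e ∈ E, ∀ f ∈ E, e ≠ f → ∀ v : ℕ, v ∈ e → v ∉ f

/-- `E` is a star `K_{1,m}` with `m` edges. -/
def IsStar (m : ℕ) (E : Set (Sym2 ℕ)) : Prop :=
  ∃ (c : ℕ) (L : Finset ℕ), c ∉ L ∧ L.card = m ∧ E = (fun x => s(c, x)) '' ↑L

/-- `C` is a cycle graph `C_n` for some `n ≥ 3`. -/
def IsCycleGraph (C : Set (Sym2 ℕ)) : Prop :=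
  ∃ n : ℕ, 3 ≤ n ∧ ∃ f : ZMod n → ℕ, Function.Injective f ∧
    C = {e : Sym2 ℕ | ∃ i : ZMod n, e = s(f i, f (i + 1))}

/-- The rank of the set `X` in the matroid `M₀`: the supremum of the cardinalities of
independent subsets of `X` (as a natural number; all sets we use are finite). -/
noncomputable def mrk (M₀ : Matroid (Sym2 ℕ)) (X : Set (Sym2 ℕ)) : ℕ :=
  sSup {n : ℕ | ∃ I ⊆ X, M₀.Indep I ∧ I.ncard = n}

/-- A vertical `k`-separation of the matroid `M₀`. -/
def VerticalSep (M₀ : Matroid (Sym2 ℕ)) (k : ℕ) (E₁ E₂ : Set (Sym2 ℕ)) : Prop :=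
  Disjoint E₁ E₂ ∧ E₁ ∪ E₂ = M₀.E ∧
  k ≤ mrk M₀ E₁ ∧ k ≤ mrk M₀ E₂ ∧
  mrk M₀ E₁ + mrk M₀ E₂ + 1 ≤ mrk M₀ M₀.E + k

/-- The matroid `M₀` is vertically `k`-connected. -/
def VerticallyConnected (M₀ : Matroid (Sym2 ℕ)) (k : ℕ) : Prop :=
  k ≤ mrk M₀ M₀.E ∧
  ∀ k' : ℕ, 0 < k' → k' < k → ∀ E₁ E₂ : Set (Sym2 ℕ), ¬ VerticalSep M₀ k' E₁ E₂

/-- A `d`-dimensional abstract rigidity matroid on the complete graph with vertex set `V`. -/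
def IsARM (d : ℕ) (V : Set ℕ) (M₀ : Matroid (Sym2 ℕ)) : Prop :=
  M₀.E = clique V ∧
  (∀ E₁ E₂ : Set (Sym2 ℕ), E₁ ⊆ clique V → E₂ ⊆ clique V →
      (eSupp E₁ ∩ eSupp E₂).ncard < d →
      M₀.closure (E₁ ∪ E₂) = M₀.closure E₁ ∪ M₀.closure E₂) ∧
  (∀ E₁ E₂ : Set (Sym2 ℕ), E₁ ⊆ clique V → E₂ ⊆ clique V →
      d ≤ (eSupp E₁ ∩ eSupp E₂).ncard →
      M₀.closure E₁ = clique (eSupp E₁) → M₀.closure E₂ = clique (eSupp E₂) →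
      M₀.closure (E₁ ∪ E₂) = clique (eSupp E₁ ∪ eSupp E₂))

/-- The `d`-dimensional edge split operation: replace an edge `uv` of `G` by a new
vertex `w` joined to `u` and `v`, as well as to `d - 1` other vertices of `G`. -/
def EdgeSplit (d : ℕ) (G G' : Set (Sym2 ℕ)) : Prop :=
  ∃ (u v w : ℕ) (X : Finset ℕ),
    s(u, v) ∈ G ∧ w ∉ eSupp G ∧ ↑X ⊆ eSupp G ∧ X.card = d - 1 ∧ u ∉ X ∧ v ∉ X ∧
    G' = (G \ {s(u, v)}) ∪ {s(w, u), s(w, v)} ∪ ((fun x => s(w, x)) '' ↑X)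

/-- A graph matroid family: a finitary matroid on the edge set of the countable
complete graph on `ℕ`, invariant under all permutations of `ℕ`. -/
structure GraphMatroidFamily where
  /-- The underlying matroid on the edge set of `K_ℕ`. -/
  M : Matroid (Sym2 ℕ)
  ground_eq : M.E = {e : Sym2 ℕ | ¬ e.IsDiag}
  finitary : M.Finitary
  invariant : ∀ σ : Equiv.Perm ℕ, ∀ I : Set (Sym2 ℕ),
    M.Indep I → M.Indep (Sym2.map σ '' I)

namespace GraphMatroidFamily

variable (M : GraphMatroidFamily)

/-- The rank function of the family: `M.rk E` is the rank of the matroid `M(G)` for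
any graph `G` whose edge set contains `E`. -/
noncomputable def rk (E : Set (Sym2 ℕ)) : ℕ := mrk M.M E

/-- A set of edges (a graph) is `M`-independent. -/
def Indep (E : Set (Sym2 ℕ)) : Prop := M.M.Indep E

/-- `C` is an `M`-circuit: a graph that is not `M`-independent, but such that deleting
any single edge from it yields an `M`-independent graph. -/
def IsCircuit (C : Set (Sym2 ℕ)) : Prop :=
  IsGraph C ∧ ¬ M.Indep C ∧ ∀ e ∈ C, M.Indep (C \ {e})

/-- The graph with edge set `E` is `M`-rigid. -/
def Rigid (E : Set (Sym2 ℕ)) : Prop := M.rk E = M.rk (clique (eSupp E))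

/-- The graph with vertex set `V` and edge set `E` is `M`-rigid. -/
def RigidOn (V : Set ℕ) (E : Set (Sym2 ℕ)) : Prop := M.rk E = M.rk (clique V)

/-- `M` is trivial if every (finite, simple) graph is `M`-independent. -/
def Trivial : Prop := ∀ E : Set (Sym2 ℕ), IsGraph E → M.Indep E

/-- `M` is unbounded: the sequence `r(K_n)` is unbounded. -/
def Unbounded : Prop := ∀ B : ℕ, ∃ n : ℕ, B < M.rk (cliqueN n)

/-- `M` is bounded: the sequence `r(K_n)` is bounded. -/
def Bounded : Prop := ∃ B : ℕ, ∀ n : ℕ, M.rk (cliqueN n) ≤ B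

/-- For a bounded family, `m` is the rank `r(M)` of `M`: the maximum (limit) of the
monotone sequence `r(K_n)`. -/
def HasRank (m : ℕ) : Prop :=
  (∀ n : ℕ, M.rk (cliqueN n) ≤ m) ∧ ∃ n : ℕ, M.rk (cliqueN n) = m

/-- `d` is the dimensionality of (the nontrivial family) `M`: the least `d` such that
there is an `M`-circuit with minimum degree `d + 1`. -/
def IsDimensionality (d : ℕ) : Prop :=
  IsLeast {d : ℕ | ∃ C, M.IsCircuit C ∧ minDeg C = d + 1} d

/-- `t` is the threshold of (the nontrivial family) `M` with dimensionality `d`: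
the least value of `|V(C)| - 1` over all `M`-circuits `C` with minimum degree `d + 1`. -/
def IsThreshold (d t : ℕ) : Prop :=
  IsLeast {t : ℕ | ∃ C, M.IsCircuit C ∧ minDeg C = d + 1 ∧ (eSupp C).ncard = t + 1} t

/-- `M` has the Lovász–Yemini property. -/
def LovaszYemini : Prop :=
  ∃ c : ℕ, ∀ E : Set (Sym2 ℕ), IsGraph E → KConnected c E → M.Rigid E

/-- `ψ` is an isomorphism between the matroids `M(G)` and `M(H)`. -/
def MatroidIso (G H : Set (Sym2 ℕ)) (ψ : Sym2 ℕ → Sym2 ℕ) : Prop :=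
  Set.BijOn ψ G H ∧ ∀ S ⊆ G, (M.Indep S ↔ M.Indep (ψ '' S))

/-- `G` is `M`-reconstructible: every isomorphism between `M(G)` and `M(H)` (for a graph
`H` without isolated vertices) is induced by a graph isomorphism. -/
def Reconstructible (G : Set (Sym2 ℕ)) : Prop :=
  ∀ H : Set (Sym2 ℕ), IsGraph H → ∀ ψ : Sym2 ℕ → Sym2 ℕ, M.MatroidIso G H ψ →
    ∃ φ : ℕ → ℕ, Set.BijOn φ (eSupp G) (eSupp H) ∧ ∀ e ∈ G, ψ e = Sym2.map φ e

/-- `M` has the Whitney property. -/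
def Whitney : Prop :=
  ∃ c : ℕ, ∀ E : Set (Sym2 ℕ), IsGraph E → KConnected c E → M.Reconstructible E

/-- `M` is the union of the graph matroid families `Ms`. -/
def IsUnionOf {k : ℕ} (Ms : Fin k → GraphMatroidFamily) : Prop :=
  ∀ I : Set (Sym2 ℕ),
    M.Indep I ↔ ∃ Is : Fin k → Set (Sym2 ℕ), (∀ i, (Ms i).Indep (Is i)) ∧ I = ⋃ i, Is i

/-- `M` is a family of `d`-dimensional abstract rigidity matroids. -/
def FamilyOfARM (d : ℕ) : Prop :=
  ∀ n : ℕ, d ≤ n → IsARM d {v : ℕ | v < n} (M.M.restrict (cliqueN n))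

/-- `M` is `1`-extendable: its dimensionality `d` is finite and positive, and the
`d`-dimensional edge split operation preserves `M`-independence. -/
def OneExtendable : Prop :=
  ∃ d : ℕ, 0 < d ∧ M.IsDimensionality d ∧
    ∀ G G' : Set (Sym2 ℕ), IsGraph G → M.Indep G → EdgeSplit d G G' → M.Indep G'

/-- `G` is `k`-vertex-redundantly `M`-rigid. -/
def VertexRedundantlyRigid (k : ℕ) (G : Set (Sym2 ℕ)) : Prop :=
  M.Rigid G ∧ ∀ S : Finset ℕ, ↑S ⊆ eSupp G → S.card ≤ k →
    M.RigidOn (eSupp G \ ↑S) (deleteVerts G ↑S)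

end GraphMatroidFamily

/-!
If every forest is independent, the perfect matching on `2m` vertices is an independent subgraph
of `K_{2m}`, so `r(K_{2m}) ≥ m`.

Conversely, a dependent forest contains a circuit `C` which is again a forest, hence has a leaf
`v` with neighbour `u`. The leaf edge `uv` is spanned by `C - uv`, which avoids `v`. Relabelling
by a permutation of `ℕ` shows that for any vertex set `S` with `|S| + 1 ≥ |V(C)|` every edge
from `S` to a new vertex is spanned by the clique on `S`. Hence `K_m` is spanned by `K_N` for
`N = |V(C)|` and every `m`, and `r(K_m) ≤ |E(K_N)|` is bounded.
-/

open Set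

namespace SimpleGraph

variable {V : Type*} {G : SimpleGraph V}

lemma isAcyclic_of_subsingleton_neighborSet (h : ∀ v, (G.neighborSet v).Subsingleton) :
    G.IsAcyclic := fun v c hc =>
  hc.snd_ne_penultimate (h v (c.adj_snd hc.not_nil) (c.adj_penultimate hc.not_nil).symm)

lemma IsAcyclic.exists_adj_forall_adj_eq [Finite G.edgeSet] (hG : G.IsAcyclic) {x y : V}
    (hxy : G.Adj x y) : ∃ u v, G.Adj u v ∧ ∀ w, G.Adj v w → w = u := by
  have : Nonempty V := ⟨x⟩
  obtain ⟨v, b, p, hp, hmax⟩ := Walk.exists_isPath_forall_isPath_length_le_length G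
  have hnil : ¬ p.Nil := by
    rw [← Walk.length_eq_zero_iff]
    have := hmax _ _ _ (Path.singleton hxy).property
    simp only [Path.singleton_coe, Walk.length_cons, Walk.length_nil] at this
    omega
  refine ⟨p.snd, v, (p.adj_snd hnil).symm, fun w hvw => hG.eq_snd_of_adj_start hp hvw ?_⟩
  by_contra hw
  have := hmax _ _ _ (hp.cons (p := p) (h := hvw.symm) hw)
  simp at this

end SimpleGraph

lemma Equiv.Perm.exists_image_subset {β : Type*} {S T : Set β} (hT : T.Finite)
    (h : T.encard ≤ S.encard) : ∃ σ : Equiv.Perm β, σ '' T ⊆ S := by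
  rcases isEmpty_or_nonempty β with hβ | hβ
  · exact ⟨1, by simp [Set.eq_empty_of_isEmpty T]⟩
  obtain ⟨f, hfS, hf⟩ := hT.exists_injOn_of_encard_le h
  have : Finite T := hT
  obtain ⟨σ, hσ⟩ := Equiv.Perm.exists_extending_pair ((↑) : T → β) (T.domRestrict f)
    Subtype.val_injective hf.injective
  refine ⟨σ, ?_⟩
  rintro _ ⟨x, hx, rfl⟩
  exact (hσ ⟨x, hx⟩).symm ▸ hfS hx

lemma Equiv.Perm.exists_image_subset_of_apply_eq {β : Type*} [DecidableEq β] {S T : Set β}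
    {u v a w : β} (hT : T.Finite) (h : T.encard ≤ S.encard) (hu : u ∈ T) (hv : v ∉ T)
    (ha : a ∈ S) (hw : w ∉ S) : ∃ σ : Equiv.Perm β, σ '' T ⊆ S ∧ σ u = a ∧ σ v = w := by
  obtain ⟨σ₀, hσ₀⟩ := Equiv.Perm.exists_image_subset hT h
  set σ₁ := Equiv.swap (σ₀ u) a * σ₀
  have hσ₁ : σ₁ '' T ⊆ S := by
    rintro _ ⟨x, hx, rfl⟩
    have := hσ₀ (mem_image_of_mem σ₀ hu)
    have := hσ₀ (mem_image_of_mem σ₀ hx)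
    simp only [σ₁, Equiv.Perm.mul_apply, Equiv.swap_apply_def]
    split_ifs <;> assumption
  -- `σ₁ v` and `w` both lie outside `σ₁ '' T`, so swapping them fixes `σ₁ '' T` pointwise.
  have hfix : ∀ x ∈ T, Equiv.swap (σ₁ v) w (σ₁ x) = σ₁ x := fun x hx =>
    Equiv.swap_apply_of_ne_of_ne (fun h => hv (σ₁.injective h ▸ hx))
      (fun h => hw (h ▸ hσ₁ (mem_image_of_mem σ₁ hx)))
  refine ⟨Equiv.swap (σ₁ v) w * σ₁, ?_, ?_, Equiv.swap_apply_left _ _⟩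
  · rintro _ ⟨x, hx, rfl⟩
    rw [Equiv.Perm.mul_apply, hfix x hx]
    exact hσ₁ (mem_image_of_mem σ₁ hx)
  · rw [Equiv.Perm.mul_apply, hfix u hu]
    exact Equiv.swap_apply_left _ _

lemma le_mrk {M₀ : Matroid (Sym2 ℕ)} {X I : Set (Sym2 ℕ)} (hX : X.Finite) (hI : M₀.Indep I)
    (hIX : I ⊆ X) : I.ncard ≤ mrk M₀ X :=
  le_csSup ⟨X.ncard, fun _ ⟨_, hJX, _, hJ⟩ => hJ ▸ ncard_le_ncard hJX hX⟩ ⟨I, hIX, hI, rfl⟩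

lemma mrk_le_ncard_of_subset_closure {M₀ : Matroid (Sym2 ℕ)} {X Y : Set (Sym2 ℕ)}
    (hY : Y.Finite) (hXY : X ⊆ M₀.closure Y) : mrk M₀ X ≤ Y.ncard := by
  refine csSup_le ⟨0, ∅, empty_subset X, M₀.empty_indep, ncard_empty _⟩ ?_
  rintro _ ⟨I, hIX, hI, rfl⟩
  have hle : I.encard ≤ Y.encard := calc
    I.encard ≤ M₀.eRk (M₀.closure Y) := hI.encard_le_eRk_of_subset (hIX.trans hXY)
    _ = M₀.eRk Y := M₀.eRk_closure_eq Y
    _ ≤ Y.encard := M₀.eRk_le_encard Y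
  exact ENat.toNat_le_toNat hle hY.encard_lt_top.ne

lemma eSupp_mono {E F : Set (Sym2 ℕ)} (h : E ⊆ F) : eSupp E ⊆ eSupp F :=
  fun _ ⟨e, he, hv⟩ => ⟨e, h he, hv⟩

lemma eSupp_finite {E : Set (Sym2 ℕ)} (hE : E.Finite) : (eSupp E).Finite := by
  refine (hE.biUnion fun e _ => ?_).subset fun v ⟨e, he, hv⟩ => mem_biUnion he hv
  induction e using Sym2.ind with
  | _ x y => exact (toFinite {x, y}).subset fun v hv => by simpa [Sym2.mem_iff] using hv

@[simp]
lemma mk_mem_clique_iff {V : Set ℕ} {x y : ℕ} : s(x, y) ∈ clique V ↔ x ≠ y ∧ x ∈ V ∧ y ∈ V := by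
  simp [clique, Sym2.mem_iff]

lemma clique_mono {V W : Set ℕ} (h : V ⊆ W) : clique V ⊆ clique W :=
  fun _ ⟨hd, hV⟩ => ⟨hd, fun v hv => h (hV v hv)⟩

lemma cliqueN_finite (n : ℕ) : (cliqueN n).Finite := by
  refine (((finite_Iio n).prod (finite_Iio n)).image fun p => s(p.1, p.2)).subset fun e he => ?_
  induction e using Sym2.ind with
  | _ x y =>
    rw [cliqueN, mk_mem_clique_iff] at he
    exact ⟨(x, y), ⟨he.2.1, he.2.2⟩, rfl⟩

lemma image_sym2Map_subset_clique {f : ℕ → ℕ} (hf : Function.Injective f) {D : Set (Sym2 ℕ)}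
    {S : Set ℕ} (hD : ∀ e ∈ D, ¬ e.IsDiag) (hfD : MapsTo f (eSupp D) S) :
    Sym2.map f '' D ⊆ clique S := by
  rintro _ ⟨e, he, rfl⟩
  refine ⟨(Sym2.isDiag_map hf).not.2 (hD e he), fun x hx => ?_⟩
  obtain ⟨y, hy, rfl⟩ := Sym2.mem_map.1 hx
  exact hfD ⟨e, he, hy⟩

lemma IsGraph.subset {E F : Set (Sym2 ℕ)} (hF : IsGraph F) (h : E ⊆ F) : IsGraph E :=
  ⟨hF.1.subset h, fun e he => hF.2 e (h he)⟩

lemma IsForest.subset {E F : Set (Sym2 ℕ)} (hF : IsForest F) (h : E ⊆ F) : IsForest E :=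
  hF.anti (SimpleGraph.fromEdgeSet_mono h)

lemma IsForest.exists_leaf {C : Set (Sym2 ℕ)} (hG : IsGraph C) (hF : IsForest C)
    (hne : C.Nonempty) : ∃ u v, s(u, v) ∈ C ∧ v ∉ eSupp (C \ {s(u, v)}) := by
  have : Finite (SimpleGraph.fromEdgeSet C).edgeSet := by
    rw [SimpleGraph.edgeSet_fromEdgeSet]; exact hG.1.sdiff.to_subtype
  obtain ⟨e, he⟩ := hne
  induction e using Sym2.ind with | _ x y => ?_
  have hxy : (SimpleGraph.fromEdgeSet C).Adj x y :=
    (SimpleGraph.fromEdgeSet_adj _).2 ⟨he, fun h => hG.2 _ he (Sym2.mk_isDiag_iff.2 h)⟩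
  obtain ⟨u, v, huv, hleaf⟩ := hF.exists_adj_forall_adj_eq hxy
  refine ⟨u, v, ((SimpleGraph.fromEdgeSet_adj _).1 huv).1, fun ⟨e, ⟨heC, hne⟩, hve⟩ => hne ?_⟩
  obtain ⟨w, rfl⟩ := Sym2.mem_iff_exists.1 hve
  have hvw : v ≠ w := fun h => hG.2 _ heC (Sym2.mk_isDiag_iff.2 h)
  rw [hleaf w ((SimpleGraph.fromEdgeSet_adj _).2 ⟨heC, hvw⟩), Sym2.eq_swap]
  rfl

def pairMatching (m : ℕ) : Set (Sym2 ℕ) := (fun i => s(2 * i, 2 * i + 1)) '' Iio m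

lemma subsingleton_neighborSet_pairMatching (m a : ℕ) :
    ((SimpleGraph.fromEdgeSet (pairMatching m)).neighborSet a).Subsingleton := fun b hb c hc => by
  obtain ⟨⟨i, -, hi⟩, -⟩ := (SimpleGraph.fromEdgeSet_adj _).1 hb
  obtain ⟨⟨j, -, hj⟩, -⟩ := (SimpleGraph.fromEdgeSet_adj _).1 hc
  rw [Sym2.eq_iff] at hi hj
  omega

lemma isGraph_pairMatching (m : ℕ) : IsGraph (pairMatching m) :=
  ⟨(finite_Iio m).image _, by rintro _ ⟨i, -, rfl⟩; rw [Sym2.mk_isDiag_iff]; omega⟩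

lemma isForest_pairMatching (m : ℕ) : IsForest (pairMatching m) :=
  SimpleGraph.isAcyclic_of_subsingleton_neighborSet (subsingleton_neighborSet_pairMatching m)

lemma pairMatching_subset_cliqueN (m : ℕ) : pairMatching m ⊆ cliqueN (2 * m) := by
  rintro _ ⟨i, hi : i < m, rfl⟩
  simp only [cliqueN, mk_mem_clique_iff, mem_ofPred_eq]
  omega

lemma ncard_pairMatching (m : ℕ) : (pairMatching m).ncard = m := by
  rw [pairMatching, ncard_image_of_injective _ fun i j h => by rw [Sym2.eq_iff] at h; omega,
    ncard_Iio_nat]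

namespace GraphMatroidFamily

variable (M : GraphMatroidFamily)

instance : M.M.Finitary := M.finitary

lemma subset_ground_of_isGraph {E : Set (Sym2 ℕ)} (hE : IsGraph E) : E ⊆ M.M.E :=
  fun e he => M.ground_eq ▸ hE.2 e he

lemma clique_subset_ground (V : Set ℕ) : clique V ⊆ M.M.E :=
  fun _ he => M.ground_eq ▸ he.1

lemma map_sym2Map_eq (σ : Equiv.Perm ℕ) :
    M.M.map (Sym2.map σ) (Sym2.map.injective σ.injective).injOn = M.M := by
  refine Matroid.ext_indep ?_ fun I _ => ⟨?_, fun hI => ⟨_, M.invariant σ.symm I hI, ?_⟩⟩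
  · rw [Matroid.map_ground, M.ground_eq]
    ext e
    refine ⟨?_, fun he => ⟨Sym2.map σ.symm e, (Sym2.isDiag_map σ.symm.injective).not.2 he, ?_⟩⟩
    · rintro ⟨f, hf, rfl⟩
      exact (Sym2.isDiag_map σ.injective).not.2 hf
    · simp [Sym2.map_map]
  · rintro ⟨I₀, hI₀, rfl⟩
    exact M.invariant σ I₀ hI₀
  · simp [image_image, Sym2.map_map]

lemma closure_image_sym2Map (σ : Equiv.Perm ℕ) (X : Set (Sym2 ℕ)) :
    M.M.closure (Sym2.map σ '' X) = Sym2.map σ '' M.M.closure X := by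
  conv_lhs => rw [← M.map_sym2Map_eq σ]
  rw [Matroid.map_closure_eq, preimage_image_eq _ (Sym2.map.injective σ.injective)]

variable {M} {C : Set (Sym2 ℕ)} {u v : ℕ}

lemma mk_mem_closure_clique (hC : M.M.IsCircuit C) (huv : s(u, v) ∈ C)
    (hv : v ∉ eSupp (C \ {s(u, v)})) {S : Set ℕ} (hS : (eSupp C).encard ≤ S.encard + 1)
    {a w : ℕ} (ha : a ∈ S) (hw : w ∉ S) : s(a, w) ∈ M.M.closure (clique S) := by
  have hnd : ∀ e ∈ C, ¬ e.IsDiag := fun e he => by simpa [M.ground_eq] using hC.subset_ground he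
  have hvC : v ∈ eSupp C := ⟨_, huv, Sym2.mem_mk_right u v⟩
  have huT : u ∈ eSupp C \ {v} :=
    ⟨⟨_, huv, Sym2.mem_mk_left u v⟩, fun h => hnd _ huv (Sym2.mk_isDiag_iff.2 h)⟩
  have hT : (eSupp C \ {v}).encard ≤ S.encard := by
    rwa [← ENat.add_le_add_iff_right ENat.one_ne_top, encard_sdiff_singleton_add_one hvC]
  obtain ⟨σ, hσT, hσu, hσv⟩ := Equiv.Perm.exists_image_subset_of_apply_eq
    (eSupp_finite hC.finite).sdiff hT huT (fun h => h.2 rfl) ha hw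
  have hDS : Sym2.map σ '' (C \ {s(u, v)}) ⊆ clique S :=
    image_sym2Map_subset_clique σ.injective (fun e he => hnd e he.1) fun x hx =>
      hσT (mem_image_of_mem σ ⟨eSupp_mono sdiff_subset hx, fun h => hv (h ▸ hx)⟩)
  have hσC : Sym2.map σ s(u, v) ∈ M.M.closure (Sym2.map σ '' (C \ {s(u, v)})) := by
    rw [closure_image_sym2Map]
    exact mem_image_of_mem _ (hC.mem_closure_sdiff_singleton_of_mem huv)
  rw [Sym2.map_mk, hσu, hσv] at hσC
  exact M.M.closure_subset_closure hDS hσC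

lemma clique_insert_subset_closure (hC : M.M.IsCircuit C) (huv : s(u, v) ∈ C)
    (hv : v ∉ eSupp (C \ {s(u, v)})) {S : Set ℕ} (hS : (eSupp C).encard ≤ S.encard + 1)
    {w : ℕ} (hw : w ∉ S) : clique (insert w S) ⊆ M.M.closure (clique S) := by
  intro e he
  induction e using Sym2.ind with | _ x y => ?_
  obtain ⟨hxy, hx, hy⟩ := mk_mem_clique_iff.1 he
  rcases hx with rfl | hx <;> rcases hy with rfl | hy
  · exact absurd rfl hxy
  · rw [Sym2.eq_swap]
    exact mk_mem_closure_clique hC huv hv hS hy hw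
  · exact mk_mem_closure_clique hC huv hv hS hx hw
  · exact M.M.subset_closure _ (M.clique_subset_ground S) (mk_mem_clique_iff.2 ⟨hxy, hx, hy⟩)

lemma cliqueN_subset_closure (hC : M.M.IsCircuit C) (huv : s(u, v) ∈ C)
    (hv : v ∉ eSupp (C \ {s(u, v)})) (m : ℕ) :
    cliqueN m ⊆ M.M.closure (cliqueN (eSupp C).ncard) := by
  set N := (eSupp C).ncard
  have hle : ∀ m ≤ N, cliqueN m ⊆ M.M.closure (cliqueN N) := fun m hm =>
    (clique_mono fun x (hx : x < m) => show x < N by omega).trans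
      (M.M.subset_closure _ (M.clique_subset_ground _))
  induction m with
  | zero => exact hle 0 N.zero_le
  | succ m ih =>
    by_cases hm : m + 1 ≤ N
    · exact hle _ hm
    have hS : (eSupp C).encard ≤ (Iio m).encard + 1 := by
      rw [← (eSupp_finite hC.finite).cast_ncard_eq, ← (finite_Iio m).cast_ncard_eq, ncard_Iio_nat]
      exact_mod_cast (by omega : N ≤ m + 1)
    calc cliqueN (m + 1) ⊆ clique (insert m (Iio m)) :=
          clique_mono fun x (hx : x < m + 1) => by rw [mem_insert_iff, mem_Iio]; omega
      _ ⊆ M.M.closure (cliqueN m) :=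
          clique_insert_subset_closure hC huv hv hS (lt_irrefl m)
      _ ⊆ M.M.closure (cliqueN N) := M.M.closure_subset_closure_of_subset_closure ih

lemma bounded_of_isCircuit (hC : M.M.IsCircuit C) (huv : s(u, v) ∈ C)
    (hv : v ∉ eSupp (C \ {s(u, v)})) : M.Bounded :=
  ⟨_, fun m => mrk_le_ncard_of_subset_closure (cliqueN_finite _)
    (cliqueN_subset_closure hC huv hv m)⟩

lemma Bounded.not_unbounded (hM : M.Bounded) : ¬ M.Unbounded := fun hU => by
  obtain ⟨B, hB⟩ := hM
  obtain ⟨n, hn⟩ := hU B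
  exact (hB n).not_gt hn

lemma le_rk_cliqueN_of_forests_indep
    (h : ∀ E : Set (Sym2 ℕ), IsGraph E → IsForest E → M.Indep E) (m : ℕ) :
    m ≤ M.rk (cliqueN (2 * m)) := by
  have := le_mrk (cliqueN_finite _) (h _ (isGraph_pairMatching m) (isForest_pairMatching m))
    (pairMatching_subset_cliqueN m)
  rwa [ncard_pairMatching] at this

end GraphMatroidFamily

/-- A graph matroid family is unbounded if and only if every forest
is `M`-independent. -/
theorem unbounded_iff_forests_indep (M : GraphMatroidFamily) :
    M.Unbounded ↔ ∀ E : Set (Sym2 ℕ), IsGraph E → IsForest E → M.Indep E := by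
  refine ⟨fun hU E hE hF => ?_, fun h B => ⟨2 * (B + 1), ?_⟩⟩
  · by_contra hdep
    obtain ⟨C, hCE, hC⟩ :=
      (M.M.not_indep_iff (M.subset_ground_of_isGraph hE)).1 hdep |>.exists_isCircuit_subset
    obtain ⟨u, v, huv, hv⟩ := (hF.subset hCE).exists_leaf (hE.subset hCE) hC.nonempty
    exact (M.bounded_of_isCircuit hC huv hv).not_unbounded hU
  · exact Nat.lt_of_lt_of_le (by omega) (M.le_rk_cliqueN_of_forests_indep h (B + 1))
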